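/- Fix s with 1/2 ≤ s < 1. Then the function J_s(r,r̃) = (r/r̃)·min{1, ((3-s)r̃-2)/((1-s)r-2)} attains the value (3-s)/(1-s) at any point of K(s) with r̃ = r(1-s)/(3-s) and (6/(7-4s))·(3-s)/(1-s) ≤ r ≤ min{6/(3-4s)_+, (2/(2-s))·(3-s)/(1-s)}; in particular the supremum of J_s over K(s) is attained. -/
import Mathlib


/-- The rectangle `K(s) = [2, 6/(3-4s)₊] × [max{1, 6/(7-4s)}, 2/(2-s)]`,
where the upper bound `6/(3-4s)₊` is interpreted as `∞` (no constraint)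
when `s ≥ 3/4`. -/
def Krect (s : ℝ) : Set (ℝ × ℝ) :=
  {p | 2 ≤ p.1 ∧ (s < 3 / 4 → p.1 ≤ 6 / (3 - 4 * s)) ∧
    max 1 (6 / (7 - 4 * s)) ≤ p.2 ∧ p.2 ≤ 2 / (2 - s)}

/-- `J_s(r,r̃) = (r/r̃)·min{1, ((3-s)r̃-2)/((1-s)r-2)}`. -/
noncomputable def Jfun (s : ℝ) (p : ℝ × ℝ) : ℝ :=
  (p.1 / p.2) * min 1 (((3 - s) * p.2 - 2) / ((1 - s) * p.1 - 2))

lemma Jfun_bound (s : ℝ) (hs : 1 / 2 ≤ s) (hs1 : s < 1) (q : ℝ × ℝ)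
    (hq : q ∈ Krect s) : Jfun s q ≤ (3 - s) / (1 - s) := by
  obtain ⟨h1, _, h3, _⟩ := hq
  set r := q.1 with hr
  set t := q.2 with ht
  have hs0 : (0:ℝ) < 1 - s := by linarith
  have h3s : (0:ℝ) < 3 - s := by linarith
  have h74 : (0:ℝ) < 7 - 4 * s := by linarith
  have ht1 : (1:ℝ) ≤ t := le_trans (le_max_left _ _) h3
  have ht0 : (0:ℝ) < t := by linarith
  have hr0 : (0:ℝ) < r := by linarith
  have ht6 : 6 / (7 - 4 * s) ≤ t := le_trans (le_max_right _ _) h3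
  have ht6' : 6 ≤ t * (7 - 4 * s) := (div_le_iff₀ h74).mp ht6
  have hN : 0 < (3 - s) * t - 2 := by nlinarith
  have htar : 0 < (3 - s) / (1 - s) := div_pos h3s hs0
  rcases le_or_gt ((1 - s) * r - 2) 0 with hD | hD
  · have hX : ((3 - s) * t - 2) / ((1 - s) * r - 2) ≤ 0 :=
      div_nonpos_iff.mpr (Or.inl ⟨hN.le, hD⟩)
    have : Jfun s q ≤ 0 := by
      apply mul_nonpos_of_nonneg_of_nonpos (by positivity)
      exact le_trans (min_le_right _ _) hX
    linarith
  · rcases le_or_gt ((1 - s) * r) ((3 - s) * t) with hle | hlt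
    · have : Jfun s q ≤ r / t := by
        unfold Jfun
        rw [← hr, ← ht]
        have := min_le_left (1:ℝ) (((3 - s) * t - 2) / ((1 - s) * r - 2))
        nlinarith [div_pos hr0 ht0]
      refine le_trans this ?_
      rw [div_le_div_iff₀ ht0 hs0]
      nlinarith
    · have : Jfun s q ≤ (r / t) * (((3 - s) * t - 2) / ((1 - s) * r - 2)) := by
        unfold Jfun
        rw [← hr, ← ht]
        have := min_le_right (1:ℝ) (((3 - s) * t - 2) / ((1 - s) * r - 2))
        nlinarith [div_pos hr0 ht0]
      refine le_trans this ?_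
      rw [div_mul_div_comm, div_le_div_iff₀ (by positivity) hs0]
      nlinarith

lemma Jfun_eq (s : ℝ) (hs : 1 / 2 ≤ s) (hs1 : s < 1) (p : ℝ × ℝ)
    (hp : p ∈ Krect s) (heq : p.2 = p.1 * (1 - s) / (3 - s))
    (hlow : 6 / (7 - 4 * s) * ((3 - s) / (1 - s)) ≤ p.1) :
    Jfun s p = (3 - s) / (1 - s) := by
  obtain ⟨h1, _, _, _⟩ := hp
  set r := p.1 with hr
  set t := p.2 with ht
  have hs0 : (0:ℝ) < 1 - s := by linarith
  have h3s : (0:ℝ) < 3 - s := by linarith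
  have h74 : (0:ℝ) < 7 - 4 * s := by linarith
  have hr0 : (0:ℝ) < r := by linarith
  have hlow' : 2 / (1 - s) < 6 / (7 - 4 * s) * ((3 - s) / (1 - s)) := by
    rw [div_mul_div_comm, div_lt_div_iff₀ hs0 (by positivity)]
    nlinarith
  have hD : 0 < (1 - s) * r - 2 := by
    have : 2 / (1 - s) < r := lt_of_lt_of_le hlow' hlow
    have := (div_lt_iff₀ hs0).mp this
    nlinarith
  have hkey : (3 - s) * t = (1 - s) * r := by
    rw [heq]; field_simp
  unfold Jfun
  rw [← hr, ← ht, hkey, div_self (ne_of_gt hD), min_self, mul_one, heq]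
  rw [div_div_eq_mul_div, mul_div_mul_left _ _ (ne_of_gt hr0)]

/-- For `1/2 ≤ s < 1`, `J_s` attains the value `(3-s)/(1-s)` at any point of
`K(s)` with `r̃ = r(1-s)/(3-s)` and
`(6/(7-4s))·(3-s)/(1-s) ≤ r ≤ min{6/(3-4s)₊, (2/(2-s))·(3-s)/(1-s)}`;
in particular the supremum of `J_s` over `K(s)` is attained. -/
theorem Jfun_attains_sup (s : ℝ) (hs : 1 / 2 ≤ s) (hs1 : s < 1) :
    (∀ p : ℝ × ℝ, p ∈ Krect s →
      p.2 = p.1 * (1 - s) / (3 - s) →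
      6 / (7 - 4 * s) * ((3 - s) / (1 - s)) ≤ p.1 →
      (s < 3 / 4 → p.1 ≤ 6 / (3 - 4 * s)) →
      p.1 ≤ 2 / (2 - s) * ((3 - s) / (1 - s)) →
      Jfun s p = (3 - s) / (1 - s)) ∧
    ∃ p ∈ Krect s, ∀ q ∈ Krect s, Jfun s q ≤ Jfun s p := by
  have hs0 : (0:ℝ) < 1 - s := by linarith
  have h3s : (0:ℝ) < 3 - s := by linarith
  have h74 : (0:ℝ) < 7 - 4 * s := by linarith
  have h2s : (0:ℝ) < 2 - s := by linarith
  constructor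
  · intro p hp heq hlow _ _
    exact Jfun_eq s hs hs1 p hp heq hlow
  · refine ⟨(6 / (7 - 4 * s) * ((3 - s) / (1 - s)), 6 / (7 - 4 * s)), ?_, ?_⟩
    · refine ⟨?_, ?_, ?_, ?_⟩
      · rw [div_mul_div_comm, le_div_iff₀ (by positivity)]
        nlinarith
      · intro h34
        have h34' : (0:ℝ) < 3 - 4 * s := by linarith
        rw [div_mul_div_comm, div_le_div_iff₀ (by positivity) h34']
        nlinarith
      · apply max_le
        · rw [le_div_iff₀ h74]; nlinarith
        · exact le_refl _
      · rw [div_le_div_iff₀ h74 h2s]; nlinarith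
    · intro q hq
      have hmem : (6 / (7 - 4 * s) * ((3 - s) / (1 - s)), 6 / (7 - 4 * s)) ∈ Krect s := by
        refine ⟨?_, ?_, ?_, ?_⟩
        · rw [div_mul_div_comm, le_div_iff₀ (by positivity)]
          nlinarith
        · intro h34
          have h34' : (0:ℝ) < 3 - 4 * s := by linarith
          rw [div_mul_div_comm, div_le_div_iff₀ (by positivity) h34']
          nlinarith
        · apply max_le
          · rw [le_div_iff₀ h74]; nlinarith
          · exact le_refl _
        · rw [div_le_div_iff₀ h74 h2s]; nlinarith
      have heq : (6 / (7 - 4 * s) * ((3 - s) / (1 - s)), 6 / (7 - 4 * s)).2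
          = (6 / (7 - 4 * s) * ((3 - s) / (1 - s)), 6 / (7 - 4 * s)).1 * (1 - s) / (3 - s) := by
        simp only
        field_simp
      rw [Jfun_eq s hs hs1 _ hmem heq (le_refl _)]
      exact Jfun_bound s hs hs1 q hq
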